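/- Let T be a finite tree with at least two distinct designated leaves u_0 and u_L, let u_1, …, u_{L−1} denote the remaining leaves, let q ≥ 1, and let S_a, S_b : {1,…,q} → Bool. Define an undirected graph H as follows: take all edges of T; add, for each i ∈ {1,…,q}, fresh vertices v^i_0, v^i_1, …, v^i_L with edges {v^i_j, v^i_{j+1}} for 0 ≤ j < L; add the edge {u_0, v^i_0} if and only if S_a(i) = true; and add the edge {u_L, v^i_L} if and only if S_b(i) = true. Then H contains a cycle if and only if there exists an index i with S_a(i) = true and S_b(i) = true. -/

import Mathlib

/-- Generating relation of the undirected lower-bound gadget `H`: all edges of the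
tree `T`, the path edges `{v^i_j, v^i_{j+1}}` for `0 ≤ j < L`, the edge
`{u 0, v^i_0}` iff `Sa i = true`, and the edge `{u L, v^i_L}` iff `Sb i = true`. -/
def undirGadgetRel {A : Type*} (T : SimpleGraph A) (L q : ℕ)
    (u : Fin (L + 1) → A) (Sa Sb : Fin q → Bool) :
    (A ⊕ (Fin q × Fin (L + 1))) → (A ⊕ (Fin q × Fin (L + 1))) → Prop
  | .inl a, .inl b => T.Adj a b
  | .inl a, .inr (i, j) =>
      (a = u 0 ∧ (j : ℕ) = 0 ∧ Sa i = true) ∨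
        (a = u (Fin.last L) ∧ (j : ℕ) = L ∧ Sb i = true)
  | .inr (i, j), .inr (i', j') => i = i' ∧ (j' : ℕ) = (j : ℕ) + 1
  | .inr _, .inl _ => False

/-!
If no index is shared, give the path vertex `v^i_j` a positive height that increases away from
the end by which the path hangs off the tree (`u_L` if `Sb i`, otherwise `u_0`), and height `0`
to tree vertices. Of any two distinct neighbours of a path vertex one is strictly higher, so no
path vertex of maximal height lies on a cycle; every cycle then lies in the tree, which is
acyclic. If `i` is shared, the edge `{u_0, v^i_0}` is not a bridge: `v^i_0` reaches `u_0` along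
the path `v^i_•`, the edge `{v^i_L, u_L}` and the tree.
-/

namespace SimpleGraph

variable {V W : Type*} {G : SimpleGraph V} {G' : SimpleGraph W}

namespace Walk

lemma IsCycle.exists_adj_ne_of_mem_support {v w : V} {c : G.Walk v v} (hc : c.IsCycle)
    (hw : w ∈ c.support) :
    ∃ x y, x ≠ y ∧ G.Adj w x ∧ G.Adj w y ∧ x ∈ c.support ∧ y ∈ c.support := by
  classical
  have hr := hc.rotate hw
  refine ⟨_, _, hr.snd_ne_penultimate, adj_snd hr.not_nil, (adj_penultimate hr.not_nil).symm,
    ?_, ?_⟩ <;> exact (mem_support_rotate_iff c w hw).mp (getVert_mem_support _ _)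

lemma IsCycle.forall_mem_support_eq_zero {v : V} {c : G.Walk v v} (hc : c.IsCycle) (f : V → ℕ)
    (hf : ∀ w x y, 0 < f w → G.Adj w x → G.Adj w y → x ≠ y → f w < f x ∨ f w < f y) :
    ∀ w ∈ c.support, f w = 0 := by
  classical
  by_contra! h
  obtain ⟨w, hw, hmax⟩ := (c.support.toFinset.filter (0 < f ·)).exists_max_image f <| by
    obtain ⟨w, hw, hfw⟩ := h
    exact ⟨w, by simpa [Nat.pos_iff_ne_zero] using ⟨hw, hfw⟩⟩
  simp only [Finset.mem_filter, List.mem_toFinset] at hw hmax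
  obtain ⟨x, y, hxy, hx, hy, hxc, hyc⟩ := hc.exists_adj_ne_of_mem_support hw.1
  rcases hf w x y hw.2 hx hy hxy with hlt | hlt
  · exact (hmax x ⟨hxc, hw.2.trans hlt⟩).not_gt hlt
  · exact (hmax y ⟨hyc, hw.2.trans hlt⟩).not_gt hlt

end Walk

lemma IsAcyclic.exists_mem_support_notMem_range (hG : G.IsAcyclic) (f : G ↪g G') {v : W}
    {c : G'.Walk v v} (hc : c.IsCycle) : ∃ x ∈ c.support, x ∉ Set.range f := by
  by_contra! h
  have hci : (c.induce _ h).IsCycle :=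
    Walk.IsCycle.of_map (f := (Embedding.induce _).toHom) (by rwa [Walk.map_induce])
  exact hG _ (hci.map (f := (Embedding.isoInduceRange f).symm.toHom) (RelIso.injective _))

end SimpleGraph

open SimpleGraph

def undirGadget {A : Type*} (T : SimpleGraph A) (L q : ℕ) (u : Fin (L + 1) → A)
    (Sa Sb : Fin q → Bool) : SimpleGraph (A ⊕ (Fin q × Fin (L + 1))) :=
  fromRel (undirGadgetRel T L q u Sa Sb)

section Gadget

variable {A : Type*} {T : SimpleGraph A} {L q : ℕ} {u : Fin (L + 1) → A}
  {Sa Sb : Fin q → Bool}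

@[simp]
lemma undirGadget_adj_inl_inl {a b : A} :
    (undirGadget T L q u Sa Sb).Adj (.inl a) (.inl b) ↔ T.Adj a b := by
  simp only [undirGadget, fromRel_adj, undirGadgetRel, ne_eq, Sum.inl.injEq]
  exact ⟨fun ⟨_, h⟩ => h.elim id .symm, fun h => ⟨h.ne, .inl h⟩⟩

@[simp]
lemma undirGadget_adj_inr_inr {i i' : Fin q} {j j' : Fin (L + 1)} :
    (undirGadget T L q u Sa Sb).Adj (.inr (i, j)) (.inr (i', j')) ↔
      i = i' ∧ ((j' : ℕ) = j + 1 ∨ (j : ℕ) = j' + 1) := by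
  simp only [undirGadget, fromRel_adj, undirGadgetRel, ne_eq, Sum.inr.injEq, Prod.mk.injEq,
    Fin.ext_iff]
  grind

@[simp]
lemma undirGadget_adj_inl_inr {a : A} {i : Fin q} {j : Fin (L + 1)} :
    (undirGadget T L q u Sa Sb).Adj (.inl a) (.inr (i, j)) ↔
      (a = u 0 ∧ (j : ℕ) = 0 ∧ Sa i = true) ∨
        (a = u (Fin.last L) ∧ (j : ℕ) = L ∧ Sb i = true) := by
  simp [undirGadget, fromRel_adj, undirGadgetRel]

@[simp]
lemma undirGadget_adj_inr_inl {a : A} {i : Fin q} {j : Fin (L + 1)} :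
    (undirGadget T L q u Sa Sb).Adj (.inr (i, j)) (.inl a) ↔
      (a = u 0 ∧ (j : ℕ) = 0 ∧ Sa i = true) ∨
        (a = u (Fin.last L) ∧ (j : ℕ) = L ∧ Sb i = true) := by
  rw [adj_comm, undirGadget_adj_inl_inr]

def undirGadgetEmbedding : T ↪g undirGadget T L q u Sa Sb where
  toEmbedding := .inl
  map_rel_iff' := undirGadget_adj_inl_inl

variable (A L) in
def undirGadgetHeight (Sb : Fin q → Bool) : A ⊕ (Fin q × Fin (L + 1)) → ℕ
  | .inl _ => 0
  | .inr (i, j) => (if Sb i then L - j else j) + 1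

lemma undirGadgetHeight_lt_of_adj_inl (hdisj : ∀ i, Sa i = true → Sb i = false) {a : A}
    {i i' : Fin q} {j j' : Fin (L + 1)}
    (ha : (undirGadget T L q u Sa Sb).Adj (.inr (i, j)) (.inl a))
    (hj' : (undirGadget T L q u Sa Sb).Adj (.inr (i, j)) (.inr (i', j'))) :
    undirGadgetHeight A L Sb (.inr (i, j)) < undirGadgetHeight A L Sb (.inr (i', j')) := by
  obtain ⟨rfl, hj'⟩ := undirGadget_adj_inr_inr.mp hj'
  have := j'.isLt
  rcases undirGadget_adj_inr_inl.mp ha with ⟨-, hj0, hSa⟩ | ⟨-, hjL, hSb⟩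
  · simp only [undirGadgetHeight, hdisj i hSa, Bool.false_eq_true, ↓reduceIte]; omega
  · simp only [undirGadgetHeight, hSb, ↓reduceIte]; omega

lemma undirGadgetHeight_lt_of_adj (hdisj : ∀ i, Sa i = true → Sb i = false) {i : Fin q}
    {j : Fin (L + 1)} {x y : A ⊕ (Fin q × Fin (L + 1))}
    (hx : (undirGadget T L q u Sa Sb).Adj (.inr (i, j)) x)
    (hy : (undirGadget T L q u Sa Sb).Adj (.inr (i, j)) y) (hxy : x ≠ y) :
    undirGadgetHeight A L Sb (.inr (i, j)) < undirGadgetHeight A L Sb x ∨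
      undirGadgetHeight A L Sb (.inr (i, j)) < undirGadgetHeight A L Sb y := by
  rcases x with a | ⟨i₁, j₁⟩ <;> rcases y with b | ⟨i₂, j₂⟩
  · rw [undirGadget_adj_inr_inl] at hx hy
    rcases hx with ⟨rfl, -, hSa⟩ | ⟨rfl, -, hSb⟩ <;>
      rcases hy with ⟨rfl, -, hSa'⟩ | ⟨rfl, -, hSb'⟩ <;> simp_all
  · exact .inr (undirGadgetHeight_lt_of_adj_inl hdisj hx hy)
  · exact .inl (undirGadgetHeight_lt_of_adj_inl hdisj hy hx)
  · obtain ⟨rfl, hx⟩ := undirGadget_adj_inr_inr.mp hx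
    obtain ⟨rfl, hy⟩ := undirGadget_adj_inr_inr.mp hy
    have := Fin.val_ne_of_ne (by simpa using hxy : j₁ ≠ j₂)
    have := j.isLt
    cases hSb : Sb i <;>
      simp only [undirGadgetHeight, hSb, Bool.false_eq_true, ↓reduceIte] <;> omega

theorem undirGadget_isAcyclic (hT : T.IsAcyclic) (hdisj : ∀ i, Sa i = true → Sb i = false) :
    (undirGadget T L q u Sa Sb).IsAcyclic := by
  intro v c hc
  obtain ⟨x, hx, hxT⟩ := hT.exists_mem_support_notMem_range undirGadgetEmbedding hc
  have hx0 := hc.forall_mem_support_eq_zero (undirGadgetHeight A L Sb) (by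
    rintro (a | ⟨i, j⟩) y z hw
    · exact absurd hw (lt_irrefl 0)
    · exact undirGadgetHeight_lt_of_adj hdisj) x hx
  rcases x with a | ⟨i, j⟩
  · exact hxT ⟨a, rfl⟩
  · exact Nat.succ_ne_zero _ hx0

theorem undirGadget_exists_isCycle (hT : T.Connected) (hL : 1 ≤ L) {i : Fin q}
    (hSa : Sa i = true) (hSb : Sb i = true) :
    ∃ v, ∃ c : (undirGadget T L q u Sa Sb).Walk v v, c.IsCycle := by
  let H' := (undirGadget T L q u Sa Sb).deleteEdges {s(.inl (u 0), .inr (i, 0))}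
  let treeHom : T →g H' := ⟨Sum.inl, fun h => by simpa [H'] using h⟩
  let pathHom : pathGraph (L + 1) →g H' :=
    ⟨fun j => .inr (i, j), fun h => by simpa [H', pathGraph_adj, or_comm, eq_comm] using h⟩
  have hlast : H'.Adj (.inl (u (Fin.last L))) (.inr (i, Fin.last L)) := by
    simp [H', hSb, Fin.ext_iff, Nat.one_le_iff_ne_zero.mp hL]
  have hreach : H'.Reachable (.inl (u 0)) (.inr (i, 0)) :=
    ((hT.preconnected _ _).map treeHom).trans <|
      hlast.reachable.trans (((pathGraph_connected L).preconnected _ _).map pathHom)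
  obtain ⟨v, c, hc, -⟩ := adj_and_reachable_delete_edges_iff_exists_cycle.mp
    ⟨undirGadget_adj_inl_inr.mpr (.inl ⟨rfl, rfl, hSa⟩), hreach⟩
  exact ⟨v, c, hc⟩

end Gadget

theorem undirGadget_has_cycle_iff_intersect_general
    {A : Type*} (T : SimpleGraph A) (hT : T.IsTree)
    (L q : ℕ) (hL : 1 ≤ L)
    (u : Fin (L + 1) → A)
    (Sa Sb : Fin q → Bool) :
    (∃ (v : A ⊕ (Fin q × Fin (L + 1)))
        (c : (SimpleGraph.fromRel (undirGadgetRel T L q u Sa Sb)).Walk v v), c.IsCycle) ↔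
      ∃ i : Fin q, Sa i = true ∧ Sb i = true := by
  constructor
  · rintro ⟨v, c, hc⟩
    by_contra! hdisj
    exact undirGadget_isAcyclic hT.isAcyclic (fun i hSa => by simpa using hdisj i hSa) c hc
  · rintro ⟨i, hSa, hSb⟩
    exact undirGadget_exists_isCycle hT.connected hL hSa hSb

/-- For a finite tree `T` whose leaves (degree-one vertices) are exactly
`u 0, u 1, …, u L`, the undirected gadget graph `H` contains a cycle if and only if
there is an index `i` with `Sa i = true` and `Sb i = true`. -/
theorem undirGadget_has_cycle_iff_intersect
    {A : Type*} [Fintype A] (T : SimpleGraph A) (hT : T.IsTree)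
    (L q : ℕ) (hL : 1 ≤ L) (hq : 1 ≤ q)
    (u : Fin (L + 1) → A) (hinj : Function.Injective u)
    (hleaf : ∀ j : Fin (L + 1), ∃! b : A, T.Adj (u j) b)
    (hall : ∀ a : A, (∃! b : A, T.Adj a b) → ∃ j, u j = a)
    (Sa Sb : Fin q → Bool) :
    (∃ (v : A ⊕ (Fin q × Fin (L + 1)))
        (c : (SimpleGraph.fromRel (undirGadgetRel T L q u Sa Sb)).Walk v v), c.IsCycle) ↔
      ∃ i : Fin q, Sa i = true ∧ Sb i = true :=
  undirGadget_has_cycle_iff_intersect_general T hT L q hL u Sa Sb
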